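/- arXiv:1810.09486 — 3 statements merged into one kernel-verified Lean document; each statement's English description precedes it below -/
import Mathlib

section
/- Let G be a convergence group on a compact metrizable space M with crossratio (·,·|·,·) defined from a G-finite symmetric annulus system generated by a single annulus (A⁻,A⁺). Let B₁, B₂, C₁, C₂ ⊆ M be sets such that for each i = 1,2 there are open sets Vᵢ ⊇ Bᵢ, Uᵢ ⊇ Cᵢ with disjoint closures. Then there exists K = K(B₁,B₂,C₁,C₂) < ∞ such that for all x ∈ B₁, y ∈ C₁, z ∈ B₂, t ∈ C₂, the crossratio satisfies (x,y|z,t) ≤ K. -/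
open Set Pointwise

section AnnulusSystem

variable {M : Type*} [TopologicalSpace M]

/-- An annulus on `M`: an ordered pair of disjoint closed sets whose union does not cover `M`. -/
def IsAnnulus (A : Set M × Set M) : Prop :=
  IsClosed A.1 ∧ IsClosed A.2 ∧ Disjoint A.1 A.2 ∧ (A.1 ∪ A.2)ᶜ.Nonempty

/-- The relation `A < B` between annuli: `int A⁺ ∪ int B⁻ = M`. -/
def AnnLt (A B : Set M × Set M) : Prop := interior A.2 ∪ interior B.1 = Set.univ

/-- There is a chain `K < A₁ < ⋯ < Aₙ < L` of annuli of `𝒜`. -/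
def HasChain (𝒜 : Set (Set M × Set M)) (K L : Set M) (n : ℕ) : Prop :=
  ∃ c : Fin n → Set M × Set M, (∀ i, c i ∈ 𝒜) ∧
    (∀ i : Fin n, (i : ℕ) = 0 → K ⊆ interior (c i).1) ∧
    (∀ i j : Fin n, (i : ℕ) + 1 = (j : ℕ) → AnnLt (c i) (c j)) ∧
    (∀ i : Fin n, (i : ℕ) + 1 = n → L ⊆ interior (c i).2)

/-- The chain length `(K|L) ∈ ℕ ∪ {∞}`. -/
noncomputable def chainLen (𝒜 : Set (Set M × Set M)) (K L : Set M) : ℕ∞ :=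
  ⨆ (n : ℕ) (_ : HasChain 𝒜 K L n), (n : ℕ∞)

/-- The crossratio `(x,y|z,t) := ({x,y}|{z,t})`. -/
noncomputable def crossratio (𝒜 : Set (Set M × Set M)) (x y z t : M) : ℕ∞ :=
  chainLen 𝒜 {x, y} {z, t}

/-- The symmetric `G`-invariant annulus system generated by a single annulus `A`. -/
def annSys (G : Type*) [Group G] [MulAction G M] (A : Set M × Set M) :
    Set (Set M × Set M) :=
  {B | ∃ g : G, B = (g • A.1, g • A.2) ∨ B = (g • A.2, g • A.1)}

end AnnulusSystem

open Filter in
/-- A group action on a topological space has the convergence property if every sequence of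
distinct elements has a subsequence converging locally uniformly on the complement of a
(repelling) point `a` to a constant (attracting) point `b`. -/
def ConvergenceAction (G M : Type*) [Group G] [TopologicalSpace M] [MulAction G M] : Prop :=
  ∀ g : ℕ → G, Function.Injective g →
    ∃ φ : ℕ → ℕ, StrictMono φ ∧ ∃ a b : M,
      ∀ K : Set M, IsCompact K → K ⊆ {a}ᶜ →
        ∀ U ∈ nhds b, ∀ᶠ n in atTop, (g (φ n)) • K ⊆ U

/-! Every annulus `B` of a chain `{x,y} < A₁ < ⋯ < Aₙ < {z,t}` has `x, y ∈ B⁻` and `z, t ∈ B⁺`,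
and the annuli of a chain are pairwise distinct, because `A < B < C` forces `A < C` while
`A < A` is impossible. So `n` is at most the number of `B = g(±A)` whose `B⁻` meets both
`closure V₁` and `closure U₁` and whose `B⁺` meets both `closure V₂` and `closure U₂`.
There are only finitely many: along an infinite sequence of such `g`, the convergence property
pushes whichever of the disjoint sets `A⁻`, `A⁺` misses the repelling point into every
neighbourhood of the attracting point, and such a neighbourhood misses one of the two disjoint
closures. -/

open Filter Topology

section AnnSys

variable {G M : Type*} [Group G] [MulAction G M] {A B : Set M × Set M}

theorem disjoint_of_mem_annSys (hA : Disjoint A.1 A.2) (hB : B ∈ annSys G A) :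
    Disjoint B.1 B.2 := by
  obtain ⟨g, rfl | rfl⟩ := hB
  exacts [disjoint_smul_set.mpr hA, disjoint_smul_set.mpr hA.symm]

theorem compl_union_nonempty_of_mem_annSys (hA : (A.1 ∪ A.2)ᶜ.Nonempty) (hB : B ∈ annSys G A) :
    (B.1 ∪ B.2)ᶜ.Nonempty := by
  obtain ⟨g, rfl | rfl⟩ := hB
  · simpa only [smul_set_union, smul_set_compl] using hA.smul_set (a := g)
  · simpa only [union_comm A.1, smul_set_union, smul_set_compl] using hA.smul_set (a := g)

end AnnSys

section Convergence

variable {G M : Type*} [Group G] [TopologicalSpace M] [MulAction G M]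

theorem exists_disjoint_smul_of_forall_eventually_smul_subset {g : ℕ → G} {a b : M}
    (hab : ∀ K : Set M, IsCompact K → K ⊆ {a}ᶜ → ∀ U ∈ 𝓝 b, ∀ᶠ n in atTop, g n • K ⊆ U)
    {K P Q : Set M} (hK : IsCompact K) (ha : a ∉ K) (hP : IsClosed P) (hQ : IsClosed Q)
    (hPQ : Disjoint P Q) : ∃ n, Disjoint (g n • K) P ∨ Disjoint (g n • K) Q := by
  have hKa : K ⊆ {a}ᶜ := subset_compl_singleton_iff.mpr ha
  by_cases hb : b ∈ P
  · obtain ⟨n, hn⟩ :=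
      (hab K hK hKa Qᶜ (hQ.isOpen_compl.mem_nhds (hPQ.notMem_of_mem_left hb))).exists
    exact ⟨n, .inr (subset_compl_iff_disjoint_right.mp hn)⟩
  · obtain ⟨n, hn⟩ := (hab K hK hKa Pᶜ (hP.isOpen_compl.mem_nhds hb)).exists
    exact ⟨n, .inl (subset_compl_iff_disjoint_right.mp hn)⟩

theorem ConvergenceAction.finite_setOf_not_disjoint_smul [CompactSpace M]
    (hconv : ConvergenceAction G M) {K₁ K₂ : Set M} (hK₁ : IsClosed K₁) (hK₂ : IsClosed K₂)
    (hK : Disjoint K₁ K₂) {P₁ Q₁ P₂ Q₂ : Set M} (hP₁ : IsClosed P₁) (hQ₁ : IsClosed Q₁)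
    (hP₂ : IsClosed P₂) (hQ₂ : IsClosed Q₂) (h₁ : Disjoint P₁ Q₁) (h₂ : Disjoint P₂ Q₂) :
    {g : G | ¬Disjoint (g • K₁) P₁ ∧ ¬Disjoint (g • K₁) Q₁ ∧
      ¬Disjoint (g • K₂) P₂ ∧ ¬Disjoint (g • K₂) Q₂}.Finite := by
  by_contra hinf
  let e := Set.Infinite.natEmbedding _ hinf
  obtain ⟨φ, -, a, b, hab⟩ := hconv (fun n => (e n : G)) (Subtype.val_injective.comp e.injective)
  have ha : a ∉ K₁ ∨ a ∉ K₂ := by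
    by_contra! h
    exact disjoint_left.mp hK h.1 h.2
  rcases ha with ha | ha
  · obtain ⟨n, hn | hn⟩ :=
      exists_disjoint_smul_of_forall_eventually_smul_subset hab hK₁.isCompact ha hP₁ hQ₁ h₁
    exacts [(e (φ n)).2.1 hn, (e (φ n)).2.2.1 hn]
  · obtain ⟨n, hn | hn⟩ :=
      exists_disjoint_smul_of_forall_eventually_smul_subset hab hK₂.isCompact ha hP₂ hQ₂ h₂
    exacts [(e (φ n)).2.2.2.1 hn, (e (φ n)).2.2.2.2 hn]

theorem ConvergenceAction.finite_annSys_not_disjoint [CompactSpace M]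
    (hconv : ConvergenceAction G M) (hA₁ : IsClosed A.1) (hA₂ : IsClosed A.2)
    (hA : Disjoint A.1 A.2) {P₁ Q₁ P₂ Q₂ : Set M} (hP₁ : IsClosed P₁) (hQ₁ : IsClosed Q₁)
    (hP₂ : IsClosed P₂) (hQ₂ : IsClosed Q₂) (h₁ : Disjoint P₁ Q₁) (h₂ : Disjoint P₂ Q₂) :
    {B | B ∈ annSys G A ∧ ¬Disjoint B.1 P₁ ∧ ¬Disjoint B.1 Q₁ ∧
      ¬Disjoint B.2 P₂ ∧ ¬Disjoint B.2 Q₂}.Finite := by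
  refine (((hconv.finite_setOf_not_disjoint_smul hA₁ hA₂ hA hP₁ hQ₁ hP₂ hQ₂ h₁ h₂).image
    fun g => (g • A.1, g • A.2)).union ((hconv.finite_setOf_not_disjoint_smul hA₂ hA₁ hA.symm
    hP₁ hQ₁ hP₂ hQ₂ h₁ h₂).image fun g => (g • A.2, g • A.1))).subset ?_
  rintro B ⟨⟨g, rfl | rfl⟩, hB⟩
  exacts [.inl ⟨g, hB, rfl⟩, .inr ⟨g, hB, rfl⟩]

end Convergence

section Chain

variable {M : Type*} [TopologicalSpace M] {A B C : Set M × Set M}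

theorem AnnLt.mem_interior_fst (h : AnnLt A B) (hA : Disjoint A.1 A.2) {m : M} (hm : m ∈ A.1) :
    m ∈ interior B.1 :=
  ((h ▸ mem_univ m : m ∈ interior A.2 ∪ interior B.1)).resolve_left
    fun h' => disjoint_left.mp hA hm (interior_subset h')

theorem AnnLt.mem_interior_snd (h : AnnLt A B) (hB : Disjoint B.1 B.2) {m : M} (hm : m ∈ B.2) :
    m ∈ interior A.2 :=
  ((h ▸ mem_univ m : m ∈ interior A.2 ∪ interior B.1)).resolve_right
    fun h' => disjoint_left.mp hB (interior_subset h') hm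

theorem AnnLt.trans (hAB : AnnLt A B) (hBC : AnnLt B C) (hB : Disjoint B.1 B.2) : AnnLt A C :=
  eq_univ_of_forall fun m =>
    ((hAB ▸ mem_univ m : m ∈ interior A.2 ∪ interior B.1)).imp_right
      fun h => hBC.mem_interior_fst hB (interior_subset h)

theorem not_annLt_self (hA : (A.1 ∪ A.2)ᶜ.Nonempty) : ¬AnnLt A A := by
  obtain ⟨m, hm⟩ := hA
  intro h
  rcases (h ▸ mem_univ m : m ∈ interior A.2 ∪ interior A.1) with h' | h'
  exacts [hm (.inr (interior_subset h')), hm (.inl (interior_subset h'))]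

theorem annLt_of_lt_of_forall_annLt_succ {n : ℕ} {c : Fin n → Set M × Set M}
    (hdisj : ∀ i, Disjoint (c i).1 (c i).2)
    (hstep : ∀ i j : Fin n, (i : ℕ) + 1 = j → AnnLt (c i) (c j)) {i j : Fin n} (hij : i < j) :
    AnnLt (c i) (c j) := by
  obtain ⟨j, hj⟩ := j
  induction j with
  | zero => exact absurd hij (Nat.not_lt_zero _)
  | succ k ih =>
    have hk : k < n := by omega
    have hlast := hstep ⟨k, hk⟩ ⟨k + 1, hj⟩ rfl
    rcases Nat.lt_succ_iff_lt_or_eq.mp hij with hik | hik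
    · exact (ih hk hik).trans hlast (hdisj _)
    · obtain rfl : i = ⟨k, hk⟩ := Fin.ext hik
      exact hlast

theorem HasChain.le_card {𝒜 : Set (Set M × Set M)} (hdisj : ∀ B ∈ 𝒜, Disjoint B.1 B.2)
    (hcover : ∀ B ∈ 𝒜, (B.1 ∪ B.2)ᶜ.Nonempty) {K L : Set M} {n : ℕ} (h : HasChain 𝒜 K L n)
    {S : Finset (Set M × Set M)} (hS : ∀ B ∈ 𝒜, K ⊆ B.1 → L ⊆ B.2 → B ∈ S) : n ≤ S.card := by
  obtain ⟨c, hc𝒜, hfirst, hstep, hlast⟩ := h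
  have hdisj' (i : Fin n) : Disjoint (c i).1 (c i).2 := hdisj _ (hc𝒜 i)
  have hlt {i j : Fin n} (hij : i < j) : AnnLt (c i) (c j) :=
    annLt_of_lt_of_forall_annLt_succ hdisj' hstep hij
  have hK (i : Fin n) : K ⊆ (c i).1 := by
    rcases (Nat.zero_le i).eq_or_lt with h | h
    · exact (hfirst i h.symm).trans interior_subset
    · exact fun m hm => interior_subset <| (hlt (i := ⟨0, i.pos⟩) h).mem_interior_fst
        (hdisj' _) (interior_subset (hfirst _ rfl hm))
  have hL (i : Fin n) : L ⊆ (c i).2 := by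
    rcases (Nat.le_sub_one_of_lt i.isLt).eq_or_lt with h | h
    · exact (hlast i (by omega)).trans interior_subset
    · exact fun m hm => interior_subset <| (hlt (j := ⟨n - 1, by omega⟩) h).mem_interior_snd
        (hdisj' _) (interior_subset (hlast _ (Nat.sub_add_cancel i.pos) hm))
  have hinj : Set.InjOn c (Finset.univ : Finset (Fin n)) := by
    intro i _ j _ hij
    by_contra hne
    rcases lt_or_gt_of_ne hne with h | h <;>
    · have hself := hlt h
      rw [hij] at hself
      exact not_annLt_self (hcover _ (hc𝒜 j)) hself
  calc n = (Finset.univ : Finset (Fin n)).card := (Finset.card_fin n).symm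
    _ ≤ S.card :=
      Finset.card_le_card_of_injOn c (fun i _ => hS _ (hc𝒜 i) (hK i) (hL i)) hinj

theorem chainLen_le_card {𝒜 : Set (Set M × Set M)} (hdisj : ∀ B ∈ 𝒜, Disjoint B.1 B.2)
    (hcover : ∀ B ∈ 𝒜, (B.1 ∪ B.2)ᶜ.Nonempty) {K L : Set M} {S : Finset (Set M × Set M)}
    (hS : ∀ B ∈ 𝒜, K ⊆ B.1 → L ⊆ B.2 → B ∈ S) : chainLen 𝒜 K L ≤ S.card :=
  iSup₂_le fun _ hn => Nat.cast_le.mpr (hn.le_card hdisj hcover hS)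

end Chain

theorem crossratio_bounded_on_separated_sets_general
    {G M : Type*} [Group G] [TopologicalSpace M]
    [CompactSpace M] [MulAction G M]
    (hconv : ConvergenceAction G M)
    (A : Set M × Set M) (hA : IsAnnulus A)
    (B₁ C₁ B₂ C₂ : Set M)
    (hsep : ∀ i : Fin 2,
      ∃ V U : Set M, IsOpen V ∧ IsOpen U ∧
        (if i = 0 then B₁ else B₂) ⊆ V ∧ (if i = 0 then C₁ else C₂) ⊆ U ∧
        closure V ∩ closure U = ∅) :
    ∃ K : ℕ, ∀ x ∈ B₁, ∀ y ∈ C₁, ∀ z ∈ B₂, ∀ t ∈ C₂,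
      crossratio (annSys G A) x y z t ≤ (K : ℕ∞) := by
  obtain ⟨hA₁, hA₂, hdisj, hcover⟩ := hA
  obtain ⟨V₁, U₁, -, -, hBV₁, hCU₁, hVU₁⟩ := hsep 0
  obtain ⟨V₂, U₂, -, -, hBV₂, hCU₂, hVU₂⟩ := hsep 1
  simp only [Fin.isValue, ↓reduceIte, one_ne_zero] at hBV₁ hCU₁ hBV₂ hCU₂
  have hfin := hconv.finite_annSys_not_disjoint hA₁ hA₂ hdisj isClosed_closure isClosed_closure
    isClosed_closure isClosed_closure (disjoint_iff_inter_eq_empty.mpr hVU₁)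
    (disjoint_iff_inter_eq_empty.mpr hVU₂)
  refine ⟨hfin.toFinset.card, fun x hx y hy z hz t ht => chainLen_le_card
    (fun _ => disjoint_of_mem_annSys hdisj) (fun _ => compl_union_nonempty_of_mem_annSys hcover)
    fun B hB hxy hzt => hfin.mem_toFinset.mpr ⟨hB, ?_, ?_, ?_, ?_⟩⟩
  · exact not_disjoint_iff.mpr ⟨x, hxy (by simp), subset_closure (hBV₁ hx)⟩
  · exact not_disjoint_iff.mpr ⟨y, hxy (by simp), subset_closure (hCU₁ hy)⟩
  · exact not_disjoint_iff.mpr ⟨z, hzt (by simp), subset_closure (hBV₂ hz)⟩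
  · exact not_disjoint_iff.mpr ⟨t, hzt (by simp), subset_closure (hCU₂ ht)⟩

theorem crossratio_bounded_on_separated_sets
    {G M : Type*} [Group G] [Countable G] [TopologicalSpace M]
    [CompactSpace M] [TopologicalSpace.MetrizableSpace M] [MulAction G M]
    (hcont : ∀ g : G, Continuous fun m : M => g • m)
    (hconv : ConvergenceAction G M)
    (A : Set M × Set M) (hA : IsAnnulus A)
    (B₁ C₁ B₂ C₂ : Set M)
    (hsep : ∀ i : Fin 2,
      ∃ V U : Set M, IsOpen V ∧ IsOpen U ∧
        (if i = 0 then B₁ else B₂) ⊆ V ∧ (if i = 0 then C₁ else C₂) ⊆ U ∧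
        closure V ∩ closure U = ∅) :
    ∃ K : ℕ, ∀ x ∈ B₁, ∀ y ∈ C₁, ∀ z ∈ B₂, ∀ t ∈ C₂,
      crossratio (annSys G A) x y z t ≤ (K : ℕ∞) :=
  crossratio_bounded_on_separated_sets_general hconv A hA B₁ C₁ B₂ C₂ hsep
end

section
/- With the setup of crossratios from an annulus system generated by one annulus under a convergence group G on a compact metrizable space M: let I ⊆ M be open and let b, c ∉ closure(I) be distinct points. Then there exists K = K(I,b,c) < ∞ such that for all x, y, a ∈ I one has (x,y|a,c) ≤ (x,y|b,c) + K. -/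
open Set Pointwise

section Helpers

variable {M : Type*} [TopologicalSpace M]

lemma annSys_isAnnulus {G : Type*} [Group G] [MulAction G M]
    (hcont : ∀ g : G, Continuous fun m : M => g • m)
    {A : Set M × Set M} (hA : IsAnnulus A) {B : Set M × Set M}
    (hB : B ∈ annSys G A) : IsAnnulus B := by
  haveI : ContinuousConstSMul G M := ⟨hcont⟩
  obtain ⟨hc1, hc2, hdis, p, hp⟩ := hA
  have hmem : ∀ (g : G) (s : Set M) (q : M), q ∉ s → g • q ∉ g • s := by
    intro g s q hq hmem
    exact hq ((Set.smul_mem_smul_set_iff).mp hmem)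
  obtain ⟨g, hg | hg⟩ := hB <;> subst hg
  · refine ⟨hc1.smul g, hc2.smul g, (Set.disjoint_smul_set).mpr hdis, g • p, ?_⟩
    intro h
    rcases h with h | h
    · exact hp (Or.inl ((Set.smul_mem_smul_set_iff).mp h))
    · exact hp (Or.inr ((Set.smul_mem_smul_set_iff).mp h))
  · refine ⟨hc2.smul g, hc1.smul g, ((Set.disjoint_smul_set).mpr hdis).symm, g • p, ?_⟩
    intro h
    rcases h with h | h
    · exact hp (Or.inr ((Set.smul_mem_smul_set_iff).mp h))
    · exact hp (Or.inl ((Set.smul_mem_smul_set_iff).mp h))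

lemma chain_push {n : ℕ} {c : Fin n → Set M × Set M}
    (hdis : ∀ i, Disjoint (c i).1 (c i).2)
    (hlt : ∀ i j : Fin n, (i : ℕ) + 1 = (j : ℕ) → AnnLt (c i) (c j))
    {p : M} : ∀ (d : ℕ) (i j : Fin n), (i : ℕ) + d = (j : ℕ) →
      p ∈ interior (c i).1 → p ∈ interior (c j).1 := by
  intro d
  induction d with
  | zero =>
    intro i j h hp
    have : i = j := Fin.ext (by omega)
    exact this ▸ hp
  | succ d ih =>
    intro i j h hp
    have hmn : (i : ℕ) + d < n := by omega
    set m : Fin n := ⟨(i : ℕ) + d, hmn⟩ with hmdef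
    have hpm : p ∈ interior (c m).1 := ih i m rfl hp
    have h1 : p ∉ interior (c m).2 := fun hq =>
      (Set.disjoint_left.mp (hdis m) (interior_subset hpm)) (interior_subset hq)
    have h2 := hlt m j (by simp only [hmdef]; omega)
    have h3 : p ∈ interior (c m).2 ∪ interior (c j).1 := by
      rw [h2]; exact Set.mem_univ p
    rcases h3 with h3 | h3
    · exact absurd h3 h1
    · exact h3

lemma chain_pull {n : ℕ} {c : Fin n → Set M × Set M}
    (hdis : ∀ i, Disjoint (c i).1 (c i).2)
    (hlt : ∀ i j : Fin n, (i : ℕ) + 1 = (j : ℕ) → AnnLt (c i) (c j))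
    {p : M} : ∀ (d : ℕ) (i j : Fin n), (i : ℕ) + d = (j : ℕ) →
      p ∈ interior (c j).2 → p ∈ interior (c i).2 := by
  intro d
  induction d with
  | zero =>
    intro i j h hp
    have : i = j := Fin.ext (by omega)
    exact this ▸ hp
  | succ d ih =>
    intro i j h hp
    have hmn : (i : ℕ) + 1 < n := by omega
    set m : Fin n := ⟨(i : ℕ) + 1, hmn⟩ with hmdef
    have hpm : p ∈ interior (c m).2 := ih m j (by simp only [hmdef]; omega) hp
    have h1 : p ∉ interior (c m).1 := fun hq =>
      (Set.disjoint_right.mp (hdis m) (interior_subset hpm)) (interior_subset hq)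
    have h2 := hlt i m (by simp only [hmdef])
    have h3 : p ∈ interior (c i).2 ∪ interior (c m).1 := by
      rw [h2]; exact Set.mem_univ p
    rcases h3 with h3 | h3
    · exact h3
    · exact absurd h3 h1

lemma chain_ne {n : ℕ} {c : Fin n → Set M × Set M}
    (hann : ∀ i, IsAnnulus (c i))
    (hlt : ∀ i j : Fin n, (i : ℕ) + 1 = (j : ℕ) → AnnLt (c i) (c j))
    {i j : Fin n} (hij : (i : ℕ) < (j : ℕ)) : c i ≠ c j := by
  obtain ⟨p, hp⟩ := (hann i).2.2.2
  have hmn : (i : ℕ) + 1 < n := by have := j.2; omega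
  set m : Fin n := ⟨(i : ℕ) + 1, by omega⟩ with hmdef
  have hpi : p ∉ interior (c i).2 := fun h => hp (Or.inr (interior_subset h))
  have h2 := hlt i m (by simp only [hmdef])
  have hpm : p ∈ interior (c m).1 := by
    have h3 : p ∈ interior (c i).2 ∪ interior (c m).1 := by
      rw [h2]; exact Set.mem_univ p
    rcases h3 with h3 | h3
    · exact absurd h3 hpi
    · exact h3
  have hpj : p ∈ interior (c j).1 :=
    chain_push (fun k => (hann k).2.2.1) hlt ((j : ℕ) - ((i : ℕ) + 1)) m j
      (by simp only [hmdef]; omega) hpm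
  intro he
  exact hp (Or.inl (he ▸ interior_subset hpj))

open Filter in
lemma finite_bad {G : Type*} [Group G] [Countable G] [MulAction G M] [CompactSpace M]
    (hconv : ConvergenceAction G M)
    {A : Set M × Set M} (hA : IsAnnulus A)
    {P₁ P₂ Q₁ Q₂ : Set M} (hP₁ : IsClosed P₁) (hP₂ : IsClosed P₂)
    (hQ₁ : IsClosed Q₁) (hQ₂ : IsClosed Q₂)
    (hP : Disjoint P₁ P₂) (hQ : Disjoint Q₁ Q₂) :
    {g : G | ((g • A.1 ∩ P₁).Nonempty ∧ (g • A.1 ∩ P₂).Nonempty ∧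
              (g • A.2 ∩ Q₁).Nonempty ∧ (g • A.2 ∩ Q₂).Nonempty) ∨
             ((g • A.2 ∩ P₁).Nonempty ∧ (g • A.2 ∩ P₂).Nonempty ∧
              (g • A.1 ∩ Q₁).Nonempty ∧ (g • A.1 ∩ Q₂).Nonempty)}.Finite := by
  by_contra hfin
  have hinf : Set.Infinite _ := hfin
  have e := hinf.natEmbedding
  set g : ℕ → G := fun k => (e k : G) with hgdef
  have hginj : Function.Injective g := fun a b h => e.injective (Subtype.ext h)
  obtain ⟨φ, hφ, a, b₀, hcv⟩ := hconv g hginj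
  obtain ⟨P, hPc, hPb, hPor⟩ : ∃ P, IsClosed P ∧ b₀ ∉ P ∧ (P = P₁ ∨ P = P₂) := by
    by_cases h : b₀ ∈ P₁
    · exact ⟨P₂, hP₂, fun hb => Set.disjoint_left.mp hP h hb, Or.inr rfl⟩
    · exact ⟨P₁, hP₁, h, Or.inl rfl⟩
  obtain ⟨Q, hQc, hQb, hQor⟩ : ∃ Q, IsClosed Q ∧ b₀ ∉ Q ∧ (Q = Q₁ ∨ Q = Q₂) := by
    by_cases h : b₀ ∈ Q₁
    · exact ⟨Q₂, hQ₂, fun hb => Set.disjoint_left.mp hQ h hb, Or.inr rfl⟩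
    · exact ⟨Q₁, hQ₁, h, Or.inl rfl⟩
  have hU : Pᶜ ∩ Qᶜ ∈ nhds b₀ :=
    (hPc.isOpen_compl.inter hQc.isOpen_compl).mem_nhds ⟨hPb, hQb⟩
  have haside : a ∉ A.1 ∨ a ∉ A.2 := by
    by_contra h
    push_neg at h
    exact Set.disjoint_left.mp hA.2.2.1 h.1 h.2
  rcases haside with ha | ha
  · have hev := hcv A.1 hA.1.isCompact (fun x hx => by
      simp only [Set.mem_compl_iff, Set.mem_singleton_iff]
      rintro rfl; exact ha hx) _ hU
    obtain ⟨k, hk⟩ := hev.exists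
    have hgS := (e (φ k)).2
    rcases hgS with ⟨h1, h2, _, _⟩ | ⟨_, _, h3, h4⟩
    · have hmeet : (g (φ k) • A.1 ∩ P).Nonempty := by
        rcases hPor with rfl | rfl
        exacts [h1, h2]
      obtain ⟨q, hq1, hq2⟩ := hmeet
      exact (hk hq1).1 hq2
    · have hmeet : (g (φ k) • A.1 ∩ Q).Nonempty := by
        rcases hQor with rfl | rfl
        exacts [h3, h4]
      obtain ⟨q, hq1, hq2⟩ := hmeet
      exact (hk hq1).2 hq2
  · have hev := hcv A.2 hA.2.1.isCompact (fun x hx => by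
      simp only [Set.mem_compl_iff, Set.mem_singleton_iff]
      rintro rfl; exact ha hx) _ hU
    obtain ⟨k, hk⟩ := hev.exists
    have hgS := (e (φ k)).2
    rcases hgS with ⟨_, _, h3, h4⟩ | ⟨h1, h2, _, _⟩
    · have hmeet : (g (φ k) • A.2 ∩ Q).Nonempty := by
        rcases hQor with rfl | rfl
        exacts [h3, h4]
      obtain ⟨q, hq1, hq2⟩ := hmeet
      exact (hk hq1).2 hq2
    · have hmeet : (g (φ k) • A.2 ∩ P).Nonempty := by
        rcases hPor with rfl | rfl
        exacts [h1, h2]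
      obtain ⟨q, hq1, hq2⟩ := hmeet
      exact (hk hq1).1 hq2

end Helpers
theorem crossratio_bounded_change_of_point
    {G M : Type*} [Group G] [Countable G] [TopologicalSpace M]
    [CompactSpace M] [TopologicalSpace.MetrizableSpace M] [MulAction G M]
    (hcont : ∀ g : G, Continuous fun m : M => g • m)
    (hconv : ConvergenceAction G M)
    (A : Set M × Set M) (hA : IsAnnulus A)
    (I : Set M) (hI : IsOpen I) (b c : M) (hbc : b ≠ c)
    (hb : b ∉ closure I) (hc : c ∉ closure I) :
    ∃ K : ℕ, ∀ x ∈ I, ∀ y ∈ I, ∀ a ∈ I,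
      crossratio (annSys G A) x y a c ≤ crossratio (annSys G A) x y b c + (K : ℕ∞) := by
  classical
  haveI : ContinuousConstSMul G M := ⟨hcont⟩
  letI : MetricSpace M := TopologicalSpace.metrizableSpaceMetric M
  obtain ⟨Vb, hVbn, hVbc, hVbs⟩ := exists_mem_nhds_isClosed_subset
    ((isClosed_closure.isOpen_compl).mem_nhds hb : (closure I)ᶜ ∈ nhds b)
  obtain ⟨Vc, hVcn, hVcc, hVcs⟩ := exists_mem_nhds_isClosed_subset
    ((isClosed_closure.isOpen_compl).mem_nhds hc : (closure I)ᶜ ∈ nhds c)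
  have hbVb : b ∈ Vb := mem_of_mem_nhds hVbn
  have hcVc : c ∈ Vc := mem_of_mem_nhds hVcn
  have hdisb : Disjoint (closure I) Vb := Set.disjoint_left.mpr fun z hz hz' => hVbs hz' hz
  have hdisc : Disjoint (closure I) Vc := Set.disjoint_left.mpr fun z hz hz' => hVcs hz' hz
  have hS : {g : G | ((g • A.1 ∩ closure I).Nonempty ∧ (g • A.1 ∩ Vb).Nonempty ∧
              (g • A.2 ∩ closure I).Nonempty ∧ (g • A.2 ∩ Vc).Nonempty) ∨
             ((g • A.2 ∩ closure I).Nonempty ∧ (g • A.2 ∩ Vb).Nonempty ∧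
              (g • A.1 ∩ closure I).Nonempty ∧ (g • A.1 ∩ Vc).Nonempty)}.Finite :=
    finite_bad hconv hA isClosed_closure hVbc isClosed_closure hVcc hdisb hdisc
  have hF : {B : Set M × Set M | B ∈ annSys G A ∧ (B.1 ∩ closure I).Nonempty ∧
      (B.1 ∩ Vb).Nonempty ∧ (B.2 ∩ closure I).Nonempty ∧ (B.2 ∩ Vc).Nonempty}.Finite := by
    apply Set.Finite.subset ((hS.image (fun g : G => (g • A.1, g • A.2))).union
      (hS.image (fun g : G => (g • A.2, g • A.1))))
    rintro B ⟨⟨g, hg | hg⟩, h1, h2, h3, h4⟩ <;> subst hg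
    · exact Or.inl ⟨g, Or.inl ⟨h1, h2, h3, h4⟩, rfl⟩
    · exact Or.inr ⟨g, Or.inr ⟨h1, h2, h3, h4⟩, rfl⟩
  refine ⟨hF.toFinset.card + 1, ?_⟩
  intro x hx y hy a ha
  refine iSup₂_le fun n hn => ?_
  obtain ⟨cc, hmem, hfirst, hlt, hlast⟩ := hn
  have hann : ∀ i, IsAnnulus (cc i) := fun i => annSys_isAnnulus hcont hA (hmem i)
  have hdis : ∀ i, Disjoint (cc i).1 (cc i).2 := fun i => (hann i).2.2.1
  have hxint : ∀ i : Fin n, x ∈ interior (cc i).1 := by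
    intro i
    have h0 : (0 : ℕ) < n := by have := i.2; omega
    exact chain_push hdis hlt i ⟨0, h0⟩ i (by simp)
      (hfirst ⟨0, h0⟩ rfl (Set.mem_insert x {y}))
  have hacint : ∀ i : Fin n, a ∈ interior (cc i).2 ∧ c ∈ interior (cc i).2 := by
    intro i
    have hn1 : n - 1 < n := by have := i.2; omega
    have hi1 : (i : ℕ) ≤ n - 1 := by have := i.2; omega
    have hlastS := hlast ⟨n - 1, hn1⟩ (by simp; omega)
    exact ⟨chain_pull hdis hlt (n - 1 - i) i ⟨n - 1, hn1⟩ (by simp; omega)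
        (hlastS (Set.mem_insert a {c})),
      chain_pull hdis hlt (n - 1 - i) i ⟨n - 1, hn1⟩ (by simp; omega)
        (hlastS (Set.mem_insert_of_mem a rfl))⟩
  by_cases hT : ∃ k : ℕ, ∃ hk : k < n, b ∉ interior (cc ⟨k, hk⟩).2
  · set m := Nat.find hT with hmdef
    obtain ⟨hmn, hbm⟩ := Nat.find_spec hT
    have hmin : ∀ k (hk : k < n), k < m → b ∈ interior (cc ⟨k, hk⟩).2 := by
      intro k hk hkm
      by_contra h
      exact Nat.find_min hT hkm ⟨hk, h⟩
    have hchainb : HasChain (annSys G A) {x, y} {b, c} m := by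
      refine ⟨fun i => cc ⟨i, lt_trans i.2 hmn⟩, fun i => hmem _, ?_, ?_, ?_⟩
      · intro i hi
        exact hfirst ⟨i, lt_trans i.2 hmn⟩ hi
      · intro i j hij
        exact hlt ⟨i, lt_trans i.2 hmn⟩ ⟨j, lt_trans j.2 hmn⟩ hij
      · intro i hi
        have him : (i : ℕ) < m := by omega
        refine Set.insert_subset (hmin i (lt_trans i.2 hmn) him) ?_
        exact Set.singleton_subset_iff.mpr (hacint ⟨i, lt_trans i.2 hmn⟩).2
    have hmle : (m : ℕ∞) ≤ crossratio (annSys G A) x y b c :=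
      le_iSup₂_of_le m hchainb le_rfl
    have hcard : n - 1 - m ≤ hF.toFinset.card := by
      set k := n - 1 - m with hkdef
      have hjlt : ∀ i : Fin k, m + 1 + (i : ℕ) < n := fun i => by have := i.2; omega
      set f : Fin k → Set M × Set M := fun i => cc ⟨m + 1 + i, hjlt i⟩ with hfdef
      have hbmem : ∀ i : Fin k, b ∈ (cc ⟨m + 1 + i, hjlt i⟩).1 := by
        intro i
        have hm1 : m + 1 < n := by have := hjlt i; omega
        have hb1 : b ∈ interior (cc ⟨m + 1, hm1⟩).1 := by
          have h2 := hlt ⟨m, hmn⟩ ⟨m + 1, hm1⟩ rfl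
          have h3 : b ∈ interior (cc ⟨m, hmn⟩).2 ∪ interior (cc ⟨m + 1, hm1⟩).1 := by
            rw [h2]; exact Set.mem_univ b
          rcases h3 with h3 | h3
          · exact absurd h3 hbm
          · exact h3
        exact interior_subset
          (chain_push hdis hlt i ⟨m + 1, hm1⟩ ⟨m + 1 + i, hjlt i⟩ (by simp) hb1)
      have hfF : ∀ i : Fin k, f i ∈ hF.toFinset := by
        intro i
        rw [Set.Finite.mem_toFinset]
        exact ⟨hmem _, ⟨x, interior_subset (hxint _), subset_closure hx⟩,
          ⟨b, hbmem i, hbVb⟩, ⟨a, interior_subset (hacint _).1, subset_closure ha⟩,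
          ⟨c, interior_subset (hacint _).2, hcVc⟩⟩
      have hfinj : Function.Injective f := by
        intro i j hij
        by_contra hne
        have hne' : (i : ℕ) ≠ (j : ℕ) := fun h => hne (Fin.ext h)
        rcases hne'.lt_or_gt with h | h
        · exact chain_ne hann hlt (i := ⟨m + 1 + (i : ℕ), hjlt i⟩)
            (j := ⟨m + 1 + (j : ℕ), hjlt j⟩) (by simp; omega) hij
        · exact chain_ne hann hlt (i := ⟨m + 1 + (j : ℕ), hjlt j⟩)
            (j := ⟨m + 1 + (i : ℕ), hjlt i⟩) (by simp; omega) hij.symm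
      calc k = Fintype.card (Fin k) := (Fintype.card_fin k).symm
      _ = Finset.univ.card := Finset.card_univ.symm
      _ = (Finset.univ.image f).card := (Finset.card_image_of_injective Finset.univ hfinj).symm
      _ ≤ hF.toFinset.card := Finset.card_le_card fun B hB => by
          obtain ⟨i, _, rfl⟩ := Finset.mem_image.mp hB
          exact hfF i
    have hnle : n ≤ m + (hF.toFinset.card + 1) := by omega
    calc (n : ℕ∞) ≤ ((m + (hF.toFinset.card + 1) : ℕ) : ℕ∞) := Nat.cast_le.mpr hnle
    _ = (m : ℕ∞) + ((hF.toFinset.card + 1 : ℕ) : ℕ∞) := by push_cast; ring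
    _ ≤ crossratio (annSys G A) x y b c + ((hF.toFinset.card + 1 : ℕ) : ℕ∞) :=
        add_le_add hmle le_rfl
  · push_neg at hT
    have hchainb : HasChain (annSys G A) {x, y} {b, c} n := by
      refine ⟨cc, hmem, hfirst, hlt, ?_⟩
      intro i hi
      refine Set.insert_subset (hT i i.2) ?_
      exact Set.singleton_subset_iff.mpr (hacint i).2
    exact le_trans (le_iSup₂_of_le n hchainb le_rfl) (self_le_add_right _ _)
end

section
/- Let G be a convergence group on a compact metrizable space M, let ρ be the quasimetric on the space of distinct triples T = {(a,b,c) ∈ M³ : a ≠ b, b ≠ c, a ≠ c} defined by ρ(x,y) = max over pairs of components of the crossratios (xⁱ,xʲ | yᵏ,yˡ). Let p ∈ M and suppose x = (x¹,x²,x³) ∈ T and p ∈ D_M(x,R), i.e., there is a sequence (xₙ) ⊂ T with ρ(x,xₙ) ≤ R for all n and xₙ → p in Tukia's topology on T ∪ M. Then (xⁱ,xʲ | p) ≤ R for all i ≠ j, where (xⁱ,xʲ|p) denotes ({xⁱ,xʲ}|{p}), the maximal annulus chain length from {xⁱ,xʲ} to {p}. -/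
/-!
If `K < A₁ < ⋯ < Aₙ < {p}` is a chain, then `p` lies in the open set `int Aₙ⁺`, which by Tukia
convergence eventually contains two components `yᵏ, yˡ` of the triples `y` of a sequence
witnessing `p ∈ D_M(x,R)`. The same chain then ends at `{yᵏ, yˡ}`, so
`n ≤ (xⁱ,xʲ|yᵏ,yˡ) ≤ ρ(x,y) ≤ R`.
-/

open Set Pointwise

section Triples

open Filter

variable {M : Type*} [TopologicalSpace M]

/-- The space of distinct triples of `M`. -/
def Tri (M : Type*) : Type _ :=
  {x : M × M × M // x.1 ≠ x.2.1 ∧ x.2.1 ≠ x.2.2 ∧ x.1 ≠ x.2.2}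

/-- The components of a triple. -/
def comp (x : Tri M) : Fin 3 → M := ![x.val.1, x.val.2.1, x.val.2.2]

/-- At least two of the three components of `x` lie in `U`. -/
def TwoIn (U : Set M) (x : Tri M) : Prop :=
  ∃ i j : Fin 3, i ≠ j ∧ comp x i ∈ U ∧ comp x j ∈ U

/-- Convergence of a sequence of distinct triples to a boundary point `p ∈ M` in Tukia's
topology on `T ∪ M`: eventually at least two components lie in any open neighbourhood of `p`. -/
def TukiaTendsto (x : ℕ → Tri M) (p : M) : Prop :=
  ∀ U : Set M, IsOpen U → p ∈ U → ∀ᶠ n in atTop, TwoIn U (x n)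

/-- The quasimetric on the space of distinct triples: the maximum of the crossratios of
pairs of components. -/
noncomputable def rhoT (𝒜 : Set (Set M × Set M)) (x y : Tri M) : ℕ∞ :=
  ⨆ (i : Fin 3) (j : Fin 3) (k : Fin 3) (l : Fin 3) (_ : i ≠ j) (_ : k ≠ l),
    crossratio 𝒜 (comp x i) (comp x j) (comp y k) (comp y l)

/-- `D_M(x,R)`: the points of `M` reachable as Tukia limits of sequences of triples staying
within `ρ`-distance `R` of `x`. -/
def DM (𝒜 : Set (Set M × Set M)) (x : Tri M) (R : ℕ) : Set M :=
  {p | ∃ xs : ℕ → Tri M, (∀ n, rhoT 𝒜 x (xs n) ≤ (R : ℕ∞)) ∧ TukiaTendsto xs p}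

/-- A finite boundary point: a point of `M` which is a Tukia limit of a sequence of triples
at bounded `ρ`-distance from some basepoint. -/
def FiniteBoundaryPoint (𝒜 : Set (Set M × Set M)) (p : M) : Prop :=
  ∃ (x₀ : Tri M) (xs : ℕ → Tri M) (R : ℕ),
    (∀ n, rhoT 𝒜 x₀ (xs n) ≤ (R : ℕ∞)) ∧ TukiaTendsto xs p

end Triples

section Chains

variable {M : Type*} [TopologicalSpace M] {𝒜 : Set (Set M × Set M)} {K L : Set M} {n : ℕ}

theorem le_chainLen (h : HasChain 𝒜 K L n) : (n : ℕ∞) ≤ chainLen 𝒜 K L :=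
  le_iSup₂ (f := fun n (_ : HasChain 𝒜 K L n) => (n : ℕ∞)) n h

theorem HasChain.exists_isOpen_forall_subset (h : HasChain 𝒜 K L n) :
    ∃ U : Set M, IsOpen U ∧ L ⊆ U ∧ ∀ L' ⊆ U, HasChain 𝒜 K L' n := by
  obtain ⟨c, hc𝒜, hK, hlt, hL⟩ := h
  cases n with
  | zero => exact ⟨univ, isOpen_univ, subset_univ L, fun _ _ =>
      ⟨c, hc𝒜, hK, hlt, fun i => i.elim0⟩⟩
  | succ n =>
    refine ⟨interior (c (Fin.last n)).2, isOpen_interior, hL _ rfl,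
      fun L' hL' => ⟨c, hc𝒜, hK, hlt, fun i hi => ?_⟩⟩
    obtain rfl : i = Fin.last n := Fin.ext (by simp only [Fin.val_last]; omega)
    exact hL'

end Chains

theorem crossratio_le_rhoT {M : Type*} [TopologicalSpace M] (𝒜 : Set (Set M × Set M))
    (x y : Tri M) {i j k l : Fin 3} (hij : i ≠ j) (hkl : k ≠ l) :
    crossratio 𝒜 (comp x i) (comp x j) (comp y k) (comp y l) ≤ rhoT 𝒜 x y :=
  le_iSup_of_le i <| le_iSup_of_le j <| le_iSup_of_le k <| le_iSup_of_le l <|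
    le_iSup_of_le hij <| le_iSup_of_le hkl le_rfl

theorem chainlen_le_of_mem_DM_general
    {G M : Type*} [Group G] [TopologicalSpace M] [MulAction G M]
    (A : Set M × Set M)
    (x : Tri M) (R : ℕ) (p : M) (hp : p ∈ DM (annSys G A) x R) :
    ∀ i j : Fin 3, i ≠ j → chainLen (annSys G A) {comp x i, comp x j} {p} ≤ (R : ℕ∞) := by
  obtain ⟨xs, hxs, htk⟩ := hp
  intro i j hij
  refine iSup₂_le fun n hn => ?_
  obtain ⟨U, hUo, hpU, hU⟩ := hn.exists_isOpen_forall_subset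
  obtain ⟨m, k, l, hkl, hk, hl⟩ := (htk U hUo (singleton_subset_iff.mp hpU)).exists
  calc (n : ℕ∞)
      ≤ crossratio (annSys G A) (comp x i) (comp x j) (comp (xs m) k) (comp (xs m) l) :=
        le_chainLen (hU _ (insert_subset hk (singleton_subset_iff.mpr hl)))
    _ ≤ rhoT (annSys G A) x (xs m) := crossratio_le_rhoT _ x (xs m) hij hkl
    _ ≤ R := hxs m

theorem chainlen_le_of_mem_DM
    {G M : Type*} [Group G] [Countable G] [TopologicalSpace M]
    [CompactSpace M] [TopologicalSpace.MetrizableSpace M] [MulAction G M]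
    (hcont : ∀ g : G, Continuous fun m : M => g • m)
    (hconv : ConvergenceAction G M)
    (A : Set M × Set M) (hA : IsAnnulus A)
    (x : Tri M) (R : ℕ) (p : M) (hp : p ∈ DM (annSys G A) x R) :
    ∀ i j : Fin 3, i ≠ j → chainLen (annSys G A) {comp x i, comp x j} {p} ≤ (R : ℕ∞) :=
  chainlen_le_of_mem_DM_general A x R p hp
end
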